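/- Let X be a chain and let α be a non-constant orientation-preserving partial transformation of X (α takes at least two distinct values). Then α admits a unique ideal: if Y and Z are both ideals of α, then Y = Z. -/
import Mathlib


variable {X : Type*}

/-- The partial transformation `f` is order-preserving on the subset `A` of its domain. -/
def IsOrdOn [LinearOrder X] (f : X →. X) (A : Set X) : Prop :=
  ∀ ⦃x y u v : X⦄, x ∈ A → y ∈ A → x ≤ y → u ∈ f x → v ∈ f y → u ≤ v

/-- `Y` is an ideal of the partial transformation `f`: a nonempty subset of the domain such
that `f` is order-preserving on `Y` and on `Dom f \ Y`, and every element of `Y` is below every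
element of `Dom f \ Y` while its image is above. -/
def IsIdeal [LinearOrder X] (f : X →. X) (Y : Set X) : Prop :=
  Y.Nonempty ∧ Y ⊆ f.Dom ∧ IsOrdOn f Y ∧ IsOrdOn f (f.Dom \ Y) ∧
    ∀ ⦃a b u v : X⦄, a ∈ Y → b ∈ f.Dom \ Y → u ∈ f a → v ∈ f b → a ≤ b ∧ v ≤ u

/-- `f` is an orientation-preserving partial transformation: it is the empty transformation
or it admits an ideal. -/
def IsOP [LinearOrder X] (f : X →. X) : Prop :=
  f.Dom = ∅ ∨ ∃ Y : Set X, IsIdeal f Y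

/-- Key lemma: if two ideals differ by an element, the transformation is constant. -/
lemma key_const [LinearOrder X] (α : X →. X) (Y Z : Set X)
    (hY : IsIdeal α Y) (hZ : IsIdeal α Z) (a : X) (haY : a ∈ Y) (haZ : a ∉ Z) :
    ∀ ⦃x u w : X⦄, u ∈ α x → w ∈ α a → u = w := by
  obtain ⟨hYne, hYsub, hYord, hYord', hYkey⟩ := hY
  obtain ⟨hZne, hZsub, hZord, hZord', hZkey⟩ := hZ
  have haDom : a ∈ α.Dom := hYsub haY
  have haDZ : a ∈ α.Dom \ Z := ⟨haDom, haZ⟩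
  -- every element of Z lies in Y
  have hZY : Z ⊆ Y := by
    intro z hz
    by_contra hzY
    have hzDom : z ∈ α.Dom := hZsub hz
    obtain ⟨uz, huz⟩ := Part.dom_iff_mem.mp hzDom
    obtain ⟨wa, hwa⟩ := Part.dom_iff_mem.mp haDom
    have h1 := hYkey haY ⟨hzDom, hzY⟩ hwa huz
    have h2 := hZkey hz haDZ huz hwa
    have : z = a := le_antisymm h2.1 h1.1
    exact haZ (this ▸ hz)
  -- value at any z ∈ Z equals value at a
  have hval : ∀ ⦃z uz w : X⦄, z ∈ Z → uz ∈ α z → w ∈ α a → uz = w := by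
    intro z uz w hz huz hw
    have h2 := hZkey hz haDZ huz hw
    have h3 := hYord (hZY hz) haY h2.1 huz hw
    exact le_antisymm h3 h2.2
  intro x u w hu hw
  have hxDom : x ∈ α.Dom := Part.dom_iff_mem.mpr ⟨u, hu⟩
  by_cases hxZ : x ∈ Z
  · exact hval hxZ hu hw
  · obtain ⟨z0, hz0⟩ := hZne
    have hz0Dom : z0 ∈ α.Dom := hZsub hz0
    obtain ⟨uz0, huz0⟩ := Part.dom_iff_mem.mp hz0Dom
    by_cases hxY : x ∈ Y
    · -- x plays the role of a
      have h2 := hZkey hz0 ⟨hxDom, hxZ⟩ huz0 hu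
      have h3 := hYord (hZY hz0) hxY h2.1 huz0 hu
      have : uz0 = u := le_antisymm h3 h2.2
      exact this ▸ hval hz0 huz0 hw
    · have h1 := hYkey haY ⟨hxDom, hxY⟩ hw hu
      have h2 := hZord' haDZ ⟨hxDom, hxZ⟩ h1.1 hw hu
      exact le_antisymm h1.2 h2

/-- A non-constant orientation-preserving partial transformation admits a unique ideal. -/
theorem stmt2 (X : Type*) [LinearOrder X] (α : X →. X) (hOP : IsOP α)
    (hnc : ∃ x y u v : X, u ∈ α x ∧ v ∈ α y ∧ u ≠ v)
    (Y Z : Set X) (hY : IsIdeal α Y) (hZ : IsIdeal α Z) : Y = Z := by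
  obtain ⟨x, y, u, v, hu, hv, huv⟩ := hnc
  ext a
  constructor
  · intro haY
    by_contra haZ
    obtain ⟨w, hw⟩ := Part.dom_iff_mem.mp (hY.2.1 haY)
    exact huv ((key_const α Y Z hY hZ a haY haZ hu hw).trans
      (key_const α Y Z hY hZ a haY haZ hv hw).symm)
  · intro haZ
    by_contra haY
    obtain ⟨w, hw⟩ := Part.dom_iff_mem.mp (hZ.2.1 haZ)
    exact huv ((key_const α Z Y hZ hY a haZ haY hu hw).trans
      (key_const α Z Y hZ hY a haZ haY hv hw).symm)
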